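/- arXiv:1511.08658 — 3 statements merged into one kernel-verified Lean document; each statement's English description precedes it below -/
import Mathlib

section
/- Let Z : ℝ → ℂ be smooth with Z′(s) = e^{iφ(s)} for a smooth real-valued function φ, and set k = φ′ (the curvature). Then the Schwarzian derivative satisfies pointwise {Z, s}_SD := Z‴(s)/Z′(s) − (3/2)(Z″(s)/Z′(s))² = (1/2)k(s)² + i k′(s). Consequently, if Z is in addition 2π-periodic (a closed curve), then ∮ {Z, s}_SD ds = (1/2)∮ k(s)² ds, where ∮ denotes ∫₀^{2π}; i.e. the integral of the Schwarzian equals the Euler–Bernoulli energy functional E[Z] = (1/2)∮ k² ds. -/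
open Real intervalIntegral Complex

/-!
Writing `Z' = e^{iφ}`, each derivative of `Z` is `e^{iφ}` times a polynomial in the derivatives
of `φ`: `Z'' = iφ' Z'` and `Z''' = (iφ'' - φ'²) Z'`, so `Z'''/Z' - (3/2)(Z''/Z')² = φ'²/2 + iφ''`.
On a closed curve `Z''/Z' = iφ'` is periodic, so the imaginary part `iφ''` integrates to zero over
a period by the fundamental theorem of calculus.
-/

theorem Function.Periodic.deriv {𝕜 F : Type*} [NontriviallyNormedField 𝕜] [NormedAddCommGroup F]
    [NormedSpace 𝕜 F] {f : 𝕜 → F} {c : 𝕜} (h : Function.Periodic f c) :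
    Function.Periodic (deriv f) c := fun x => by
  rw [← deriv_comp_add_const, funext h]

theorem hasDerivAt_cexp_I_mul_ofReal {φ : ℝ → ℝ} {φ' x : ℝ} (h : HasDerivAt φ φ' x) :
    HasDerivAt (fun t => cexp (I * φ t)) (I * φ' * cexp (I * φ x)) x := by
  simpa only [mul_comm (cexp _)] using (h.ofReal_comp.const_mul I).cexp

noncomputable def schwarzian (Z : ℝ → ℂ) (s : ℝ) : ℂ :=
  iteratedDeriv 3 Z s / deriv Z s - (3/2) * (iteratedDeriv 2 Z s / deriv Z s) ^ 2

section TangentAngle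

variable {Z : ℝ → ℂ} {φ : ℝ → ℝ}

theorem iteratedDeriv_two_of_deriv_eq_cexp (htan : deriv Z = fun t => cexp (I * φ t))
    (hφ : Differentiable ℝ φ) :
    iteratedDeriv 2 Z = fun s => I * deriv φ s * cexp (I * φ s) := by
  ext s
  rw [iteratedDeriv_succ, iteratedDeriv_one, htan]
  exact (hasDerivAt_cexp_I_mul_ofReal (hφ s).hasDerivAt).deriv

theorem iteratedDeriv_three_of_deriv_eq_cexp (htan : deriv Z = fun t => cexp (I * φ t))
    (hφ : Differentiable ℝ φ) (hφ' : Differentiable ℝ (deriv φ)) (s : ℝ) :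
    iteratedDeriv 3 Z s = (I * deriv (deriv φ) s - deriv φ s ^ 2) * cexp (I * φ s) := by
  rw [iteratedDeriv_succ, iteratedDeriv_two_of_deriv_eq_cexp htan hφ]
  have hderiv := ((hφ' s).hasDerivAt.ofReal_comp.const_mul I).mul
    (hasDerivAt_cexp_I_mul_ofReal (hφ s).hasDerivAt)
  refine hderiv.deriv.trans ?_
  linear_combination ((deriv φ s : ℝ) : ℂ) ^ 2 * cexp (I * φ s) * I_sq

theorem schwarzian_of_deriv_eq_cexp (htan : deriv Z = fun t => cexp (I * φ t))
    (hφ : Differentiable ℝ φ) (hφ' : Differentiable ℝ (deriv φ)) (s : ℝ) :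
    schwarzian Z s = 1/2 * ((deriv φ s : ℝ) : ℂ) ^ 2 + I * ((deriv (deriv φ) s : ℝ) : ℂ) := by
  have hne : cexp (I * φ s) ≠ 0 := Complex.exp_ne_zero _
  rw [schwarzian, iteratedDeriv_three_of_deriv_eq_cexp htan hφ hφ',
    iteratedDeriv_two_of_deriv_eq_cexp htan hφ, htan]
  field_simp
  linear_combination (-3 : ℂ) * ((deriv φ s : ℝ) : ℂ) ^ 2 * I_sq

theorem periodic_deriv_of_deriv_eq_cexp {c : ℝ} (hZ : Function.Periodic Z c)
    (htan : deriv Z = fun t => cexp (I * φ t)) (hφ : Differentiable ℝ φ) :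
    Function.Periodic (deriv φ) c := fun s => by
  have hZ' : Function.Periodic (deriv Z) c := hZ.deriv
  have hZ'' : Function.Periodic (iteratedDeriv 2 Z) c := by
    rw [iteratedDeriv_succ, iteratedDeriv_one]
    exact hZ'.deriv
  have hexp : cexp (I * φ (s + c)) = cexp (I * φ s) := by simpa only [htan] using hZ' s
  have h : I * deriv φ (s + c) * cexp (I * φ s) = I * deriv φ s * cexp (I * φ s) := by
    simpa only [iteratedDeriv_two_of_deriv_eq_cexp htan hφ, hexp] using hZ'' s
  exact_mod_cast mul_left_cancel₀ I_ne_zero (mul_right_cancel₀ (Complex.exp_ne_zero _) h)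

theorem integral_schwarzian_of_deriv_eq_cexp {c : ℝ} (hZ : Function.Periodic Z c)
    (htan : deriv Z = fun t => cexp (I * φ t)) (hφ : ContDiff ℝ 2 φ) :
    ∫ s in (0:ℝ)..c, schwarzian Z s = ((1/2 * ∫ s in (0:ℝ)..c, deriv φ s ^ 2 : ℝ) : ℂ) := by
  obtain ⟨hφd, -, hφ'⟩ := (contDiff_succ_iff_deriv (n := 1)).mp hφ
  obtain ⟨hφ'd, hφ''⟩ := contDiff_one_iff_deriv.mp hφ'
  have hper := periodic_deriv_of_deriv_eq_cexp hZ htan hφd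
  calc ∫ s in (0:ℝ)..c, schwarzian Z s
      = ∫ s in (0:ℝ)..c, (((1/2 * deriv φ s ^ 2 : ℝ) : ℂ) + I * deriv (deriv φ) s) :=
        integral_congr fun s _ => by
          rw [schwarzian_of_deriv_eq_cexp htan hφd hφ'd]; push_cast; rfl
    _ = ((∫ s in (0:ℝ)..c, 1/2 * deriv φ s ^ 2 : ℝ) : ℂ) + I * (deriv φ c - deriv φ 0 : ℝ) := by
        rw [integral_add (Continuous.intervalIntegrable (by fun_prop) _ _)
          (Continuous.intervalIntegrable (by fun_prop) _ _), intervalIntegral.integral_ofReal,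
          integral_const_mul I, intervalIntegral.integral_ofReal,
          integral_deriv_eq_sub (fun x _ => hφ'd x) (hφ''.intervalIntegrable _ _)]
    _ = ((1/2 * ∫ s in (0:ℝ)..c, deriv φ s ^ 2 : ℝ) : ℂ) := by
        rw [← zero_add c, hper 0, integral_const_mul]
        simp

end TangentAngle

theorem schwarzian_eq_half_curvature_sq_add_I_deriv_general
    (Z : ℝ → ℂ) (φ : ℝ → ℝ) (k : ℝ → ℝ)
    (hφ : ContDiff ℝ (⊤:ℕ∞) φ)
    (htan : ∀ s, deriv Z s = Complex.exp (Complex.I * φ s))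
    (hk : k = deriv φ) :
    (∀ s, iteratedDeriv 3 Z s / deriv Z s
        - (3/2) * (iteratedDeriv 2 Z s / deriv Z s) ^ 2
        = (1/2) * (Complex.ofReal (k s)) ^ 2 + Complex.I * Complex.ofReal (deriv k s)) ∧
    (Function.Periodic Z (2 * π) →
      (∫ s in (0:ℝ)..(2 * π),
          (iteratedDeriv 3 Z s / deriv Z s
            - (3/2) * (iteratedDeriv 2 Z s / deriv Z s) ^ 2))
        = Complex.ofReal ((1/2) * ∫ s in (0:ℝ)..(2 * π), (k s) ^ 2)) := by
  subst hk
  have hφ2 : ContDiff ℝ 2 φ := hφ.of_le (by norm_cast)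
  have hφ1 : ContDiff ℝ 1 (deriv φ) := ((contDiff_succ_iff_deriv (n := 1)).mp hφ2).2.2
  have htan' : deriv Z = fun t => cexp (I * φ t) := funext htan
  exact ⟨schwarzian_of_deriv_eq_cexp htan' (hφ2.differentiable (by norm_num))
      (hφ1.differentiable one_ne_zero),
    fun hZ => integral_schwarzian_of_deriv_eq_cexp hZ htan' hφ2⟩

/-- For a smooth unit-speed plane curve `Z : ℝ → ℂ` with
tangent angle `φ` (`Z' = e^{iφ}`) and curvature `k = φ'`, the Schwarzian
derivative satisfies pointwise
`{Z,s}_SD = Z'''/Z' - (3/2)(Z''/Z')² = (1/2)k² + i k'`;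
consequently, if `Z` is `2π`-periodic then
`∮ {Z,s}_SD ds = (1/2) ∮ k² ds`, the Euler–Bernoulli energy. -/
theorem schwarzian_eq_half_curvature_sq_add_I_deriv
    (Z : ℝ → ℂ) (φ : ℝ → ℝ) (k : ℝ → ℝ)
    (hZ : ContDiff ℝ (⊤:ℕ∞) Z) (hφ : ContDiff ℝ (⊤:ℕ∞) φ)
    (htan : ∀ s, deriv Z s = Complex.exp (Complex.I * φ s))
    (hk : k = deriv φ) :
    (∀ s, iteratedDeriv 3 Z s / deriv Z s
        - (3/2) * (iteratedDeriv 2 Z s / deriv Z s) ^ 2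
        = (1/2) * (Complex.ofReal (k s)) ^ 2 + Complex.I * Complex.ofReal (deriv k s)) ∧
    (Function.Periodic Z (2 * π) →
      (∫ s in (0:ℝ)..(2 * π),
          (iteratedDeriv 3 Z s / deriv Z s
            - (3/2) * (iteratedDeriv 2 Z s / deriv Z s) ^ 2))
        = Complex.ofReal ((1/2) * ∫ s in (0:ℝ)..(2 * π), (k s) ^ 2)) :=
  schwarzian_eq_half_curvature_sq_add_I_deriv_general Z φ k hφ htan hk
end

section
/- Let Z : ℝ × ℝ → ℂ be a smooth family with |∂_s Z| ≡ 1, tangent angle φ (∂_s Z = e^{iφ}), curvature k = ∂_s φ, and ∂_t Z = (vʳ + i vⁱ)∂_s Z with vʳ, vⁱ smooth real-valued. Assume moreover that k(s,t) ≠ 0 for all (s,t). Then the curvature evolves by ∂_t k = ∂_s( ∂_s( (1/k)·∂_s vʳ ) + k·vʳ ), i.e. ∂_t k = Ω_I vʳ where Ω_I = ∂_s(∂_s (1/k) ∂_s + k). -/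
open Real

/-- Partial derivative in the first (arclength) variable, `ℂ`-valued. -/
noncomputable def dS (f : ℝ → ℝ → ℂ) (s t : ℝ) : ℂ := deriv (fun σ => f σ t) s

/-- Partial derivative in the second (time) variable, `ℂ`-valued. -/
noncomputable def dT (f : ℝ → ℝ → ℂ) (s t : ℝ) : ℂ := deriv (fun τ => f s τ) t

/-- Partial derivative in the first (arclength) variable, `ℝ`-valued. -/
noncomputable def dSr (f : ℝ → ℝ → ℝ) (s t : ℝ) : ℝ := deriv (fun σ => f σ t) s

/-- Partial derivative in the second (time) variable, `ℝ`-valued. -/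
noncomputable def dTr (f : ℝ → ℝ → ℝ) (s t : ℝ) : ℝ := deriv (fun τ => f s τ) t

/-!
Differentiating `∂ₛZ = e^{iφ}` in `t` and `∂ₜZ = v e^{iφ}` in `s`, the equality of mixed partials
`∂ₜ∂ₛZ = ∂ₛ∂ₜZ` becomes, after division by `e^{iφ}`, the compatibility condition
`i ∂ₜφ = ∂ₛv + i k v`. Its real part gives `vⁱ = (1/k) ∂ₛvʳ` and its imaginary part
`∂ₜφ = ∂ₛvⁱ + k vʳ`; then `∂ₜk = ∂ₜ∂ₛφ = ∂ₛ∂ₜφ = ∂ₛ(∂ₛ((1/k) ∂ₛvʳ) + k vʳ)`.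
-/

open Complex

section MixedPartials

variable {𝕜 : Type*} [NontriviallyNormedField 𝕜] {E : Type*} [NormedAddCommGroup E]
  [NormedSpace 𝕜 E]

theorem fderiv_fderiv_apply {G : Type*} [NormedAddCommGroup G] [NormedSpace 𝕜 G] {F : G → E}
    {x : G} (h : DifferentiableAt 𝕜 (fderiv 𝕜 F) x) (v w : G) :
    fderiv 𝕜 (fun y => fderiv 𝕜 F y v) x w = fderiv 𝕜 (fderiv 𝕜 F) x w v := by
  rw [fderiv_clm_apply h (differentiableAt_const v)]
  simp

variable {F : 𝕜 × 𝕜 → E} {s t : 𝕜}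

theorem DifferentiableAt.hasDerivAt_slice_fst (hF : DifferentiableAt 𝕜 F (s, t)) :
    HasDerivAt (fun σ => F (σ, t)) (fderiv 𝕜 F (s, t) (1, 0)) s :=
  hF.hasFDerivAt.comp_hasDerivAt s ((hasDerivAt_id s).prodMk (hasDerivAt_const s t))

theorem DifferentiableAt.hasDerivAt_slice_snd (hF : DifferentiableAt 𝕜 F (s, t)) :
    HasDerivAt (fun τ => F (s, τ)) (fderiv 𝕜 F (s, t) (0, 1)) t :=
  hF.hasFDerivAt.comp_hasDerivAt t ((hasDerivAt_const t s).prodMk (hasDerivAt_id t))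

theorem ContDiff.deriv_deriv_comm [IsRCLikeNormedField 𝕜] (hF : ContDiff 𝕜 2 F) (s t : 𝕜) :
    deriv (fun τ => deriv (fun σ => F (σ, τ)) s) t
      = deriv (fun σ => deriv (fun τ => F (σ, τ)) t) s := by
  have hF1 : Differentiable 𝕜 F := hF.differentiable two_ne_zero
  have hF2 : Differentiable 𝕜 (fderiv 𝕜 F) :=
    (hF.fderiv_right le_rfl).differentiable one_ne_zero
  have hpartial (v : 𝕜 × 𝕜) : Differentiable 𝕜 (fun p => fderiv 𝕜 F p v) :=
    ((hF.fderiv_right le_rfl).clm_apply contDiff_const).differentiable one_ne_zero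
  have hsymm : IsSymmSndFDerivAt 𝕜 F (s, t) := hF.contDiffAt.isSymmSndFDerivAt (by simp)
  calc deriv (fun τ => deriv (fun σ => F (σ, τ)) s) t
      = deriv (fun τ => fderiv 𝕜 F (s, τ) (1, 0)) t := by
        simp only [fun τ => ((hF1 (s, τ)).hasDerivAt_slice_fst).deriv]
    _ = fderiv 𝕜 (fderiv 𝕜 F) (s, t) (0, 1) (1, 0) := by
        rw [((hpartial (1, 0)) (s, t)).hasDerivAt_slice_snd.deriv, fderiv_fderiv_apply (hF2 _)]
    _ = fderiv 𝕜 (fderiv 𝕜 F) (s, t) (1, 0) (0, 1) := hsymm _ _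
    _ = deriv (fun σ => deriv (fun τ => F (σ, τ)) t) s := by
        rw [← fderiv_fderiv_apply (hF2 _), ← ((hpartial (0, 1)) (s, t)).hasDerivAt_slice_fst.deriv]
        simp only [fun σ => ((hF1 (σ, t)).hasDerivAt_slice_snd).deriv]

end MixedPartials

section PartialDerivatives

theorem dT_dS_comm {f : ℝ → ℝ → ℂ} (hf : ContDiff ℝ 2 (fun p : ℝ × ℝ => f p.1 p.2)) (s t : ℝ) :
    dT (dS f) s t = dS (dT f) s t :=
  hf.deriv_deriv_comm s t

theorem dTr_dSr_comm {f : ℝ → ℝ → ℝ} (hf : ContDiff ℝ 2 (fun p : ℝ × ℝ => f p.1 p.2)) (s t : ℝ) :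
    dTr (dSr f) s t = dSr (dTr f) s t :=
  hf.deriv_deriv_comm s t

variable {s t : ℝ}

theorem hasDerivAt_dSr {f : ℝ → ℝ → ℝ}
    (hf : DifferentiableAt ℝ (fun p : ℝ × ℝ => f p.1 p.2) (s, t)) :
    HasDerivAt (fun σ => f σ t) (dSr f s t) s :=
  hf.hasDerivAt_slice_fst.differentiableAt.hasDerivAt

theorem hasDerivAt_dTr {f : ℝ → ℝ → ℝ}
    (hf : DifferentiableAt ℝ (fun p : ℝ × ℝ => f p.1 p.2) (s, t)) :
    HasDerivAt (fun τ => f s τ) (dTr f s t) t :=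
  hf.hasDerivAt_slice_snd.differentiableAt.hasDerivAt

theorem hasDerivAt_ofReal_add_I_mul {u w : ℝ → ℝ → ℝ}
    (hu : DifferentiableAt ℝ (fun p : ℝ × ℝ => u p.1 p.2) (s, t))
    (hw : DifferentiableAt ℝ (fun p : ℝ × ℝ => w p.1 p.2) (s, t)) :
    HasDerivAt (fun σ => (u σ t : ℂ) + I * (w σ t : ℂ)) (dSr u s t + I * dSr w s t) s :=
  (hasDerivAt_dSr hu).ofReal_comp.add ((hasDerivAt_dSr hw).ofReal_comp.const_mul _)

end PartialDerivatives

theorem HasDerivAt.cexp_I_mul_ofReal {f : ℝ → ℝ} {f' x : ℝ} (hf : HasDerivAt f f' x) :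
    HasDerivAt (fun y => Complex.exp (I * (f y : ℂ)))
      (Complex.exp (I * (f x : ℂ)) * (I * (f' : ℂ))) x :=
  (hf.ofReal_comp.const_mul I).cexp

theorem I_mul_dTr_eq_dS_add_mul_I_mul_dSr {Z v : ℝ → ℝ → ℂ} {φ : ℝ → ℝ → ℝ}
    (hZ : ContDiff ℝ 2 (fun p : ℝ × ℝ => Z p.1 p.2))
    (hφ : Differentiable ℝ (fun p : ℝ × ℝ => φ p.1 p.2))
    (hv : ∀ s t, DifferentiableAt ℝ (fun σ => v σ t) s)
    (htan : ∀ s t, dS Z s t = exp (I * φ s t))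
    (hdef : ∀ s t, dT Z s t = v s t * dS Z s t) (s t : ℝ) :
    I * dTr φ s t = dS v s t + v s t * (I * dSr φ s t) := by
  have hdSZ : dS Z = fun σ τ => exp (I * φ σ τ) := funext₂ htan
  have hdTZ : dT Z = fun σ τ => v σ τ * exp (I * φ σ τ) :=
    funext₂ fun σ τ => by rw [hdef, htan]
  have hts : dT (dS Z) s t = exp (I * φ s t) * (I * dTr φ s t) := by
    rw [hdSZ]
    exact (HasDerivAt.cexp_I_mul_ofReal (hasDerivAt_dTr (hφ (s, t)))).deriv
  have hst : dS (dT Z) s t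
      = dS v s t * exp (I * φ s t) + v s t * (exp (I * φ s t) * (I * dSr φ s t)) := by
    rw [hdTZ]
    exact ((hv s t).hasDerivAt.mul
      (HasDerivAt.cexp_I_mul_ofReal (hasDerivAt_dSr (hφ (s, t))))).deriv
  have hcomm := dT_dS_comm hZ s t
  rw [hts, hst] at hcomm
  apply mul_left_cancel₀ (exp_ne_zero (I * φ s t))
  linear_combination hcomm

theorem isometric_deformation_compatibility {Z : ℝ → ℝ → ℂ} {φ vr vi : ℝ → ℝ → ℝ}
    (hZ : ContDiff ℝ 2 (fun p : ℝ × ℝ => Z p.1 p.2))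
    (hφ : Differentiable ℝ (fun p : ℝ × ℝ => φ p.1 p.2))
    (hvr : Differentiable ℝ (fun p : ℝ × ℝ => vr p.1 p.2))
    (hvi : Differentiable ℝ (fun p : ℝ × ℝ => vi p.1 p.2))
    (htan : ∀ s t, dS Z s t = exp (I * φ s t))
    (hdef : ∀ s t, dT Z s t = (vr s t + I * vi s t) * dS Z s t) (s t : ℝ) :
    dSr vr s t = vi s t * dSr φ s t ∧ dTr φ s t = dSr vi s t + vr s t * dSr φ s t := by
  have hv σ τ := hasDerivAt_ofReal_add_I_mul (hvr (σ, τ)) (hvi (σ, τ))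
  have h := I_mul_dTr_eq_dS_add_mul_I_mul_dSr hZ hφ (fun σ τ => (hv σ τ).differentiableAt)
    htan hdef s t
  rw [dS, (hv s t).deriv] at h
  have hre := congrArg re h
  have him := congrArg im h
  simp only [add_re, add_im, mul_re, mul_im, I_re, I_im, ofReal_re, ofReal_im] at hre him
  constructor <;> linarith

theorem isometric_deformation_OmegaI_general
    (Z : ℝ → ℝ → ℂ) (φ vr vi k : ℝ → ℝ → ℝ)
    (hZ : ContDiff ℝ (⊤:ℕ∞) (fun p : ℝ × ℝ => Z p.1 p.2))
    (hφ : ContDiff ℝ (⊤:ℕ∞) (fun p : ℝ × ℝ => φ p.1 p.2))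
    (hvr : ContDiff ℝ (⊤:ℕ∞) (fun p : ℝ × ℝ => vr p.1 p.2))
    (hvi : ContDiff ℝ (⊤:ℕ∞) (fun p : ℝ × ℝ => vi p.1 p.2))
    (htan : ∀ s t, dS Z s t = Complex.exp (Complex.I * φ s t))
    (hk : ∀ s t, k s t = dSr φ s t)
    (hknz : ∀ s t, k s t ≠ 0)
    (hdef : ∀ s t, dT Z s t
      = (Complex.ofReal (vr s t) + Complex.I * Complex.ofReal (vi s t)) * dS Z s t) :
    ∀ s t, dTr k s t
      = dSr (fun σ τ =>
          dSr (fun a b => (1 / k a b) * dSr vr a b) σ τ + k σ τ * vr σ τ) s t := by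
  have h2 : (2 : WithTop ℕ∞) ≤ (⊤ : ℕ∞) := WithTop.coe_le_coe.mpr le_top
  have hcompat := isometric_deformation_compatibility (hZ.of_le h2)
    (hφ.differentiable (by simp)) (hvr.differentiable (by simp)) (hvi.differentiable (by simp))
    htan hdef
  obtain rfl : k = dSr φ := funext₂ hk
  have hvi_eq : (fun a b => 1 / dSr φ a b * dSr vr a b) = vi :=
    funext₂ fun a b => by rw [(hcompat a b).1]; field_simp [hknz a b]
  have hφt : dTr φ = fun σ τ => dSr vi σ τ + dSr φ σ τ * vr σ τ :=
    funext₂ fun σ τ => by rw [(hcompat σ τ).2]; ring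
  intro s t
  rw [hvi_eq, ← hφt]
  exact dTr_dSr_comm (hφ.of_le h2) s t

/-- For an isometric deformation `Z(s,t)` of a plane curve
(`|∂ₛZ| ≡ 1`) with tangent angle `φ`, curvature `k = ∂ₛφ`, deformation
velocity `∂ₜZ = (vʳ + i vⁱ) ∂ₛZ`, and nowhere-vanishing curvature, the
curvature evolves by `∂ₜk = ∂ₛ(∂ₛ((1/k) ∂ₛvʳ) + k vʳ)`, i.e. `∂ₜk = Ω_I vʳ`
where `Ω_I = ∂ₛ(∂ₛ (1/k) ∂ₛ + k)`. -/
theorem isometric_deformation_OmegaI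
    (Z : ℝ → ℝ → ℂ) (φ vr vi k : ℝ → ℝ → ℝ)
    (hZ : ContDiff ℝ (⊤:ℕ∞) (fun p : ℝ × ℝ => Z p.1 p.2))
    (hφ : ContDiff ℝ (⊤:ℕ∞) (fun p : ℝ × ℝ => φ p.1 p.2))
    (hvr : ContDiff ℝ (⊤:ℕ∞) (fun p : ℝ × ℝ => vr p.1 p.2))
    (hvi : ContDiff ℝ (⊤:ℕ∞) (fun p : ℝ × ℝ => vi p.1 p.2))
    (hunit : ∀ s t, ‖dS Z s t‖ = 1)
    (htan : ∀ s t, dS Z s t = Complex.exp (Complex.I * φ s t))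
    (hk : ∀ s t, k s t = dSr φ s t)
    (hknz : ∀ s t, k s t ≠ 0)
    (hdef : ∀ s t, dT Z s t
      = (Complex.ofReal (vr s t) + Complex.I * Complex.ofReal (vi s t)) * dS Z s t) :
    ∀ s t, dTr k s t
      = dSr (fun σ τ =>
          dSr (fun a b => (1 / k a b) * dSr vr a b) σ τ + k σ τ * vr σ τ) s t :=
  isometric_deformation_OmegaI_general Z φ vr vi k hZ hφ hvr hvi htan hk hknz hdef
end

section
/- Let k, uʳ, uⁱ, vʳ, vⁱ : ℝ → ℝ be smooth and 2π-periodic, let ℓ ≥ 1 be a natural number, and define the pairing ⟨u, v⟩_ℓ = (1/2)∫₀^{2π} ( uʳ(s) vⁱ(s) − uⁱ(s) vʳ(s) )·k(s)^ℓ ds for u = uʳ + i uⁱ, v = vʳ + i vⁱ. Then: (1) ⟨u, v⟩_ℓ = −⟨v, u⟩_ℓ (antisymmetry); (2) if u and v both satisfy the isometric condition, k·uⁱ = ∂_s uʳ and k·vⁱ = ∂_s vʳ, then ⟨u, v⟩_ℓ = (1/2)∫₀^{2π} k(s)^{ℓ−1} ( uʳ(s) ∂_s vʳ(s) − vʳ(s)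 ∂_s uʳ(s) ) ds; (3) in particular, for ℓ = 1, ⟨u, v⟩₁ = −∫₀^{2π} vʳ(s) ∂_s uʳ(s) ds. -/
/-!
Antisymmetry and the isometric formula are pointwise identities of the integrands, the latter
after substituting `k uⁱ = ∂ₛuʳ`, `k vⁱ = ∂ₛvʳ` into `kˡ = kˡ⁻¹ · k`. For `ℓ = 1` the two terms
of the integrand are exchanged by integration by parts, whose boundary term vanishes by periodicity.
-/

open Real

/-- `⟨u, v⟩_ℓ` for `u = uʳ + i uⁱ` and `v = vʳ + i vⁱ`. -/
noncomputable def symplecticPairing (k ur ui vr vi : ℝ → ℝ) (ℓ : ℕ) : ℝ :=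
  (1/2) * ∫ s in (0:ℝ)..(2 * π), (ur s * vi s - ui s * vr s) * k s ^ ℓ

def IsIsometric (k wr wi : ℝ → ℝ) : Prop :=
  ∀ s, k s * wi s = deriv wr s

theorem integral_mul_deriv_eq_neg_of_periodic {f g : ℝ → ℝ} {T : ℝ}
    (hf : ContDiff ℝ 1 f) (hg : ContDiff ℝ 1 g)
    (hfT : Function.Periodic f T) (hgT : Function.Periodic g T) :
    ∫ x in (0:ℝ)..T, f x * deriv g x = -∫ x in (0:ℝ)..T, g x * deriv f x := by
  have hf' : Continuous (deriv f) := hf.continuous_deriv le_rfl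
  have hg' : Continuous (deriv g) := hg.continuous_deriv le_rfl
  have hfd := hf.differentiable one_ne_zero
  have hgd := hg.differentiable one_ne_zero
  have hparts := intervalIntegral.integral_mul_deriv_eq_deriv_mul
    (fun x _ => (hfd x).hasDerivAt) (fun x _ => (hgd x).hasDerivAt)
    (hf'.intervalIntegrable 0 T) (hg'.intervalIntegrable 0 T)
  have hf0 := hfT 0
  have hg0 := hgT 0
  rw [zero_add] at hf0 hg0
  simp only [hparts, hf0, hg0, sub_self, zero_sub, mul_comm (deriv f _)]

theorem symplecticPairing_antisymm (k ur ui vr vi : ℝ → ℝ) (ℓ : ℕ) :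
    symplecticPairing k ur ui vr vi ℓ = -symplecticPairing k vr vi ur ui ℓ := by
  unfold symplecticPairing
  rw [← mul_neg, ← intervalIntegral.integral_neg]
  congr 2
  ext s
  ring

theorem symplecticPairing_eq_of_isometric {k ur ui vr vi : ℝ → ℝ} {ℓ : ℕ} (hℓ : 1 ≤ ℓ)
    (hu : IsIsometric k ur ui) (hv : IsIsometric k vr vi) :
    symplecticPairing k ur ui vr vi ℓ
      = (1/2) * ∫ s in (0:ℝ)..(2 * π),
          k s ^ (ℓ - 1) * (ur s * deriv vr s - vr s * deriv ur s) := by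
  unfold symplecticPairing
  congr 2
  ext s
  obtain ⟨m, rfl⟩ := Nat.exists_eq_add_of_le' hℓ
  rw [← hu s, ← hv s, Nat.add_sub_cancel]
  ring

theorem symplecticPairing_one_eq_of_isometric {k ur ui vr vi : ℝ → ℝ}
    (hur : ContDiff ℝ 1 ur) (hvr : ContDiff ℝ 1 vr)
    (hurper : Function.Periodic ur (2 * π)) (hvrper : Function.Periodic vr (2 * π))
    (hu : IsIsometric k ur ui) (hv : IsIsometric k vr vi) :
    symplecticPairing k ur ui vr vi 1 = -∫ s in (0:ℝ)..(2 * π), vr s * deriv ur s := by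
  have hint {f g : ℝ → ℝ} (hf : ContDiff ℝ 1 f) (hg : ContDiff ℝ 1 g) :
      IntervalIntegrable (fun s => f s * deriv g s) MeasureTheory.volume 0 (2 * π) :=
    (hf.continuous.mul (hg.continuous_deriv le_rfl)).intervalIntegrable _ _
  rw [symplecticPairing_eq_of_isometric le_rfl hu hv]
  simp only [Nat.sub_self, pow_zero, one_mul]
  rw [intervalIntegral.integral_sub (hint hur hvr) (hint hvr hur),
    integral_mul_deriv_eq_neg_of_periodic hur hvr hurper hvrper]
  ring

theorem symplectic_pairing_properties_general
    (k ur ui vr vi : ℝ → ℝ)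
    (hur : ContDiff ℝ (⊤:ℕ∞) ur)
    (hvr : ContDiff ℝ (⊤:ℕ∞) vr)
    (hurper : Function.Periodic ur (2 * π))
    (hvrper : Function.Periodic vr (2 * π))
    (ℓ : ℕ) (hℓ : 1 ≤ ℓ) :
    ((1/2) * (∫ s in (0:ℝ)..(2 * π), (ur s * vi s - ui s * vr s) * (k s) ^ ℓ)
      = -((1/2) * ∫ s in (0:ℝ)..(2 * π), (vr s * ui s - vi s * ur s) * (k s) ^ ℓ)) ∧
    ((∀ s, k s * ui s = deriv ur s) → (∀ s, k s * vi s = deriv vr s) →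
      ((1/2) * (∫ s in (0:ℝ)..(2 * π), (ur s * vi s - ui s * vr s) * (k s) ^ ℓ)
        = (1/2) * ∫ s in (0:ℝ)..(2 * π),
            (k s) ^ (ℓ - 1) * (ur s * deriv vr s - vr s * deriv ur s)) ∧
      (ℓ = 1 →
        (1/2) * (∫ s in (0:ℝ)..(2 * π), (ur s * vi s - ui s * vr s) * (k s) ^ ℓ)
          = -∫ s in (0:ℝ)..(2 * π), vr s * deriv ur s)) := by
  refine ⟨symplecticPairing_antisymm k ur ui vr vi ℓ, fun hu hv => ?_⟩
  refine ⟨symplecticPairing_eq_of_isometric hℓ hu hv, ?_⟩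
  rintro rfl
  exact symplecticPairing_one_eq_of_isometric (hur.of_le (mod_cast le_top))
    (hvr.of_le (mod_cast le_top)) hurper hvrper hu hv

/-- For smooth `2π`-periodic `k, uʳ, uⁱ, vʳ, vⁱ : ℝ → ℝ`
and `ℓ ≥ 1`, with the pairing
`⟨u,v⟩_ℓ = (1/2)∫₀^{2π} (uʳvⁱ - uⁱvʳ) kˡ ds`:
(1) the pairing is antisymmetric; (2) if `u` and `v` satisfy the isometric
condition (`k uⁱ = ∂ₛuʳ`, `k vⁱ = ∂ₛvʳ`), then
`⟨u,v⟩_ℓ = (1/2)∫₀^{2π} k^{ℓ-1}(uʳ ∂ₛvʳ - vʳ ∂ₛuʳ) ds`;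
(3) in particular, for `ℓ = 1`, `⟨u,v⟩₁ = -∫₀^{2π} vʳ ∂ₛuʳ ds`. -/
theorem symplectic_pairing_properties
    (k ur ui vr vi : ℝ → ℝ)
    (hk : ContDiff ℝ (⊤:ℕ∞) k) (hur : ContDiff ℝ (⊤:ℕ∞) ur)
    (hui : ContDiff ℝ (⊤:ℕ∞) ui) (hvr : ContDiff ℝ (⊤:ℕ∞) vr)
    (hvi : ContDiff ℝ (⊤:ℕ∞) vi)
    (hkper : Function.Periodic k (2 * π))
    (hurper : Function.Periodic ur (2 * π))
    (huiper : Function.Periodic ui (2 * π))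
    (hvrper : Function.Periodic vr (2 * π))
    (hviper : Function.Periodic vi (2 * π))
    (ℓ : ℕ) (hℓ : 1 ≤ ℓ) :
    ((1/2) * (∫ s in (0:ℝ)..(2 * π), (ur s * vi s - ui s * vr s) * (k s) ^ ℓ)
      = -((1/2) * ∫ s in (0:ℝ)..(2 * π), (vr s * ui s - vi s * ur s) * (k s) ^ ℓ)) ∧
    ((∀ s, k s * ui s = deriv ur s) → (∀ s, k s * vi s = deriv vr s) →
      ((1/2) * (∫ s in (0:ℝ)..(2 * π), (ur s * vi s - ui s * vr s) * (k s) ^ ℓ)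
        = (1/2) * ∫ s in (0:ℝ)..(2 * π),
            (k s) ^ (ℓ - 1) * (ur s * deriv vr s - vr s * deriv ur s)) ∧
      (ℓ = 1 →
        (1/2) * (∫ s in (0:ℝ)..(2 * π), (ur s * vi s - ui s * vr s) * (k s) ^ ℓ)
          = -∫ s in (0:ℝ)..(2 * π), vr s * deriv ur s)) :=
  symplectic_pairing_properties_general k ur ui vr vi hur hvr hurper hvrper ℓ hℓ
end
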